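/- Let f(z) = exp(exp z) and c = log 2. Then f(z+c) = f(z)² for all z ∈ ℂ; consequently f omits the values 0 and ∞, and whenever f(z₀) = 1 with multiplicity k then f(z₀+c) = 1 with multiplicity at least k. Hence f has three exceptional paired values (0, 1 and ∞) with separation log 2, yet f is not periodic with period log 2 (and f has a value, namely 1, which f attains). -/

import Mathlib

open MeasureTheory Filter

noncomputable section

/-- The positive part of the logarithm, `log⁺ x = max(0, log x)`. -/
def logPlus (x : ℝ) : ℝ := max 0 (Real.log x)

/-- The Nevanlinna proximity function `m(r, f)`. -/
def prox (f : ℂ → ℂ) (r : ℝ) : ℝ :=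
  (2 * Real.pi)⁻¹ * ∫ θ in (0:ℝ)..(2 * Real.pi), logPlus ‖f (r * Complex.exp (θ * Complex.I))‖

/-- The order of the meromorphic function `f` at the point `z`, as an integer
(zero if `f` is not meromorphic at `z`, or if `f` vanishes identically near `z`). -/
def meroOrdAt (f : ℂ → ℂ) (z : ℂ) : ℤ := by
  classical exact if h : MeromorphicAt f z then (meromorphicOrderAt f z).untopD 0 else 0

/-- The multiplicity of a pole of `f` at `z` (zero if `z` is not a pole). -/
def poleMult (f : ℂ → ℂ) (z : ℂ) : ℕ := (-(meroOrdAt f z)).toNat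

/-- The multiplicity of a zero of `f` at `z` (zero if `z` is not a zero). -/
def zeroMult (f : ℂ → ℂ) (z : ℂ) : ℕ := (meroOrdAt f z).toNat

/-- The unintegrated counting function `n(r, f)` of the poles of `f`, with multiplicity. -/
def poleCount (f : ℂ → ℂ) (r : ℝ) : ℝ :=
  ∑' z : Metric.closedBall (0:ℂ) r, (poleMult f z : ℝ)

/-- The unintegrated counting function `n(r, 1/f)` of the zeros of `f`, with multiplicity. -/
def zeroCount (f : ℂ → ℂ) (r : ℝ) : ℝ :=
  ∑' z : Metric.closedBall (0:ℂ) r, (zeroMult f z : ℝ)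

/-- The integrated counting function associated to an unintegrated counting function `n`. -/
def integCount (n : ℝ → ℝ) (r : ℝ) : ℝ :=
  (∫ t in (0:ℝ)..r, (n t - n 0) / t) + n 0 * Real.log r

/-- The Nevanlinna (integrated) counting function `N(r, f)` of poles of `f`. -/
def countN (f : ℂ → ℂ) (r : ℝ) : ℝ := integCount (poleCount f) r

/-- The Nevanlinna (integrated) counting function `N(r, 1/f)` of zeros of `f`. -/
def countNzero (f : ℂ → ℂ) (r : ℝ) : ℝ := integCount (zeroCount f) r

/-- The Nevanlinna characteristic function `T(r, f) = m(r, f) + N(r, f)`. -/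
def nevT (f : ℂ → ℂ) (r : ℝ) : ℝ := prox f r + countN f r

/-- `f` has finite order: `limsup_{r → ∞} log T(r,f) / log r < ∞`. -/
def FiniteOrder (f : ℂ → ℂ) : Prop :=
  IsBoundedUnder (· ≤ ·) atTop (fun r : ℝ => Real.log (nevT f r) / Real.log r)

/-- A set `E ⊆ (0, ∞)` has finite logarithmic measure: `∫_E dt/t < ∞`. -/
def FiniteLogMeasure (E : Set ℝ) : Prop :=
  E ⊆ Set.Ioi 0 ∧ (∫⁻ t in E, ENNReal.ofReal (1 / t)) < ⊤

/-- `g ∈ 𝒮(f)`: `g` is small compared to `f`, i.e. `T(r,g) = o(T(r,f))` outside a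
possible exceptional set of finite logarithmic measure. -/
def SmallFunc (f g : ℂ → ℂ) : Prop :=
  ∃ E : Set ℝ, FiniteLogMeasure E ∧
    ∀ ε : ℝ, 0 < ε → ∀ᶠ r in atTop ⊓ Filter.principal Eᶜ, nevT g r ≤ ε * nevT f r

/-- The exact difference operator `Δ_c f = f(z + c) - f(z)`. -/
def deltaC (c : ℂ) (f : ℂ → ℂ) : ℂ → ℂ := fun z => f (z + c) - f z

/-- The iterated difference operator `Δ^n_c`. -/
def deltaIter (c : ℂ) : ℕ → (ℂ → ℂ) → (ℂ → ℂ)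
  | 0, f => f
  | n + 1, f => deltaC c (deltaIter c n f)

/-- `f` is periodic with period `c` as a meromorphic function: `f(z+c) ≡ f(z)`,
i.e. `f(z + c) = f(z)` away from an at most countable (exceptional) set. -/
def MeroPeriodic (c : ℂ) (f : ℂ → ℂ) : Prop :=
  Set.Countable {z : ℂ | f (z + c) ≠ f z}

/-- `f` is constant as a meromorphic function. -/
def MeroConst (f : ℂ → ℂ) : Prop := ∃ a : ℂ, Set.Countable {z : ℂ | f z ≠ a}

/-- `f ≡ g` as meromorphic functions: they agree away from an at most countable set. -/
def MeroEq (f g : ℂ → ℂ) : Prop := Set.Countable {z : ℂ | f z ≠ g z}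

/-- The unintegrated counting function `n_c(r, ∞)` of `c`-separated pole pairs of `f`:
a pair of poles of multiplicity `p` at `z₀` and `q` at `z₀ + c` is counted
`min(p,q) + m` times, where `m` is the number of equal initial terms of the Laurent
expansions of `f(z)` and `f(z+c)` about `z₀`; equivalently it is counted
`p + q + ord_{z₀}(Δ_c f)` times. -/
def pairPoleCount (c : ℂ) (f : ℂ → ℂ) (r : ℝ) : ℝ :=
  ∑' z : Metric.closedBall (0:ℂ) r,
    if 1 ≤ poleMult f z ∧ 1 ≤ poleMult f ((z : ℂ) + c) then
      (poleMult f z : ℝ) + (poleMult f ((z : ℂ) + c) : ℝ) + (meroOrdAt (deltaC c f) z : ℝ)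
    else 0

/-- The unintegrated counting function `n_c(r, 0)` of `c`-separated zero pairs of `g`
(for `g = f - a` these are the `c`-separated `a`-pairs of `f`): a pair of zeros at `z₀`
and `z₀ + c` is counted according to the number of equal initial terms of the Taylor
expansions about `z₀`, i.e. `ord_{z₀}(Δ_c g)` times. -/
def pairZeroCount (c : ℂ) (g : ℂ → ℂ) (r : ℝ) : ℝ :=
  ∑' z : Metric.closedBall (0:ℂ) r,
    if 1 ≤ zeroMult g z ∧ 1 ≤ zeroMult g ((z : ℂ) + c) then (meroOrdAt (deltaC c g) z : ℝ)
    else 0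

/-- The integrated pair-counting function `N_c(r, f)` (pole pairs). -/
def countNcPoles (c : ℂ) (f : ℂ → ℂ) (r : ℝ) : ℝ := integCount (pairPoleCount c f) r

/-- The integrated pair-counting function `N_c(r, 1/g)` (zero pairs of `g`). -/
def countNcZeros (c : ℂ) (g : ℂ → ℂ) (r : ℝ) : ℝ := integCount (pairZeroCount c g) r

/-- `Ñ_c(r, f) = N(r, f) - N_c(r, f)`, counting poles not in `c`-separated pairs. -/
def tildeNpoles (c : ℂ) (f : ℂ → ℂ) (r : ℝ) : ℝ := countN f r - countNcPoles c f r

/-- `Ñ_c(r, 1/g) = N(r, 1/g) - N_c(r, 1/g)`, counting zeros of `g` not in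
`c`-separated pairs. -/
def tildeNzeros (c : ℂ) (g : ℂ → ℂ) (r : ℝ) : ℝ := countNzero g r - countNcZeros c g r

/-- The unintegrated counting function `n₀(r, f)` of poles `z₀` of `f` at which the
Laurent expansions of `f(z)` and `f(z+c)` about `z₀` have identical principal parts
(equivalently, `Δ_c f` is analytic at `z₀`), each counted according to the number of
equal initial terms of the analytic parts, i.e. `ord_{z₀}(Δ_c f)` times. -/
def n0PtCount (c : ℂ) (f : ℂ → ℂ) (r : ℝ) : ℝ :=
  ∑' z : Metric.closedBall (0:ℂ) r,
    if 1 ≤ poleMult f z ∧ 0 ≤ meroOrdAt (deltaC c f) z then (meroOrdAt (deltaC c f) z : ℝ)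
    else 0

/-- The integrated counting function `N₀(r, f)`. -/
def countN0 (c : ℂ) (f : ℂ → ℂ) (r : ℝ) : ℝ := integCount (n0PtCount c f) r

/-- The Nevanlinna deficiency `δ(a, f)` of a (moving) target `a`. -/
def defect (f a : ℂ → ℂ) : ℝ :=
  liminf (fun r => prox (fun z => (f z - a z)⁻¹) r / nevT f r) atTop

/-- The Nevanlinna deficiency `δ(∞, f)` of the value `∞`. -/
def defectInf (f : ℂ → ℂ) : ℝ := liminf (fun r => prox f r / nevT f r) atTop

/-- The `c`-separated pair index `π_c(a, f)`. -/
def pairIndex (c : ℂ) (f a : ℂ → ℂ) : ℝ :=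
  liminf (fun r => countNcZeros c (fun z => f z - a z) r / nevT f r) atTop

/-- The `c`-separated pair index `π_c(∞, f)`. -/
def pairIndexInf (c : ℂ) (f : ℂ → ℂ) : ℝ :=
  liminf (fun r => countNcPoles c f r / nevT f r) atTop

/-- The quantity `Π_c(a, f) = 1 - limsup Ñ_c(r, a) / T(r, f)`. -/
def PiIndex (c : ℂ) (f a : ℂ → ℂ) : ℝ :=
  1 - limsup (fun r => tildeNzeros c (fun z => f z - a z) r / nevT f r) atTop

/-- The quantity `Π_c(∞, f)`. -/
def PiIndexInf (c : ℂ) (f : ℂ → ℂ) : ℝ :=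
  1 - limsup (fun r => tildeNpoles c f r / nevT f r) atTop

/-- The multiplicity with which `f` takes the value `a` (a point of the extended complex
plane, `none` denoting `∞`) at the point `z`. -/
def valMult (f : ℂ → ℂ) (a : Option ℂ) (z : ℂ) : ℕ :=
  match a with
  | none => poleMult f z
  | some b => zeroMult (fun w => f w - b) z

/-- `a` is an exceptional paired value of `f` with separation `c`: for all except at
most finitely many `a`-points of `f`, whenever `f(z) = a` then also `f(z+c) = a` with
the same or higher multiplicity. -/
def ExceptionalPaired (c : ℂ) (f : ℂ → ℂ) (a : Option ℂ) : Prop :=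
  Set.Finite {z : ℂ | 1 ≤ valMult f a z ∧ valMult f a (z + c) < valMult f a z}

/-- `a` is completely paired with separation `c`: whenever `f(z) = a` then `f(z+c) = a`
or `f(z-c) = a`, with the same multiplicity. -/
def CompletelyPaired (c : ℂ) (f : ℂ → ℂ) (a : Option ℂ) : Prop :=
  ∀ z : ℂ, 1 ≤ valMult f a z →
    valMult f a (z + c) = valMult f a z ∨ valMult f a (z - c) = valMult f a z

/-- The `a`-points of `f` appear only in lines of three with separation `c`. -/
def AppearsInLinesOfThree (c : ℂ) (f : ℂ → ℂ) (a : Option ℂ) : Prop :=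
  ∀ z : ℂ, 1 ≤ valMult f a z →
    ∃ z₀ : ℂ, (z = z₀ + c ∨ z = z₀ + 2 * c ∨ z = z₀ + 3 * c) ∧
      valMult f a z₀ = 0 ∧ valMult f a (z₀ + 4 * c) = 0 ∧
      ∃ k : ℕ, 1 ≤ k ∧ ∀ j : ℕ, 1 ≤ j → j ≤ 3 → valMult f a (z₀ + (j : ℂ) * c) = k

/-- The `a`-points of `f` appear only in lines of four or more with separation `c`. -/
def AppearsInLinesOfFourPlus (c : ℂ) (f : ℂ → ℂ) (a : Option ℂ) : Prop :=
  ∀ z : ℂ, 1 ≤ valMult f a z →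
    ∃ z₀ : ℂ, ∃ n : ℕ, 4 ≤ n ∧ (∃ j : ℕ, 1 ≤ j ∧ j ≤ n ∧ z = z₀ + (j : ℂ) * c) ∧
      valMult f a z₀ = 0 ∧ valMult f a (z₀ + ((n : ℂ) + 1) * c) = 0 ∧
      ∃ k : ℕ, 1 ≤ k ∧ ∀ j : ℕ, 1 ≤ j → j ≤ n → valMult f a (z₀ + (j : ℂ) * c) = k

/-- The point `z` belongs to a `c`-separated `a`-pair of `h` (for a moving target `a`). -/
def PairedPt (c : ℂ) (h a : ℂ → ℂ) (z : ℂ) : Prop :=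
  1 ≤ zeroMult (fun w => h w - a w) z ∧
    (1 ≤ zeroMult (fun w => h w - a w) (z + c) ∨ 1 ≤ zeroMult (fun w => h w - a w) (z - c))

/-- `f` and `g` share the (moving) value `a`, ignoring `c`-separated pairs: `f(z) = a`
exactly when `g(z) = a` with the same multiplicity, except possibly at points belonging
to a `c`-separated `a`-pair of `f` or of `g`. -/
def ShareIgnoringPairs (c : ℂ) (f g a : ℂ → ℂ) : Prop :=
  ∀ z : ℂ, ¬ PairedPt c f a z → ¬ PairedPt c g a z →
    zeroMult (fun w => f w - a w) z = zeroMult (fun w => g w - a w) z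

end

section Aux

lemma meroOrdAt_of_analytic' {g : ℂ → ℂ} {z : ℂ} (hg : AnalyticAt ℂ g z) :
    meroOrdAt g z = (meromorphicOrderAt g z).untopD 0 := by
  simp [meroOrdAt, dif_pos hg.meromorphicAt]

lemma zeroMult_eq_zero' {g : ℂ → ℂ} {z : ℂ} (hg : AnalyticAt ℂ g z) (h : g z ≠ 0) :
    zeroMult g z = 0 := by
  have ho : analyticOrderAt g z = (0 : ℕ) := by
    rw [hg.analyticOrderAt_eq_natCast]
    exact ⟨g, hg, h, by filter_upwards with w; simp⟩
  have : meromorphicOrderAt g z = ((0:ℤ) : WithTop ℤ) := by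
    rw [hg.meromorphicOrderAt_eq, ho]; rfl
  simp [zeroMult, meroOrdAt_of_analytic' hg, this]

lemma zeroMult_eq_one' {g : ℂ → ℂ} {z : ℂ} (hg : AnalyticAt ℂ g z) (h0 : g z = 0)
    (h1 : deriv g z ≠ 0) : zeroMult g z = 1 := by
  have ho : analyticOrderAt g z = (1 : ℕ) := by
    rw [hg.analyticOrderAt_eq_natCast]
    refine ⟨dslope g z, ?_, by rwa [dslope_same], ?_⟩
    · obtain ⟨p, hp⟩ := hg
      exact (hp.has_fpower_series_dslope_fslope).analyticAt
    · filter_upwards with w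
      rw [pow_one, sub_smul_dslope, h0, sub_zero]
  have : meromorphicOrderAt g z = ((1:ℤ) : WithTop ℤ) := by
    rw [hg.meromorphicOrderAt_eq, ho]; rfl
  simp [zeroMult, meroOrdAt_of_analytic' hg, this]

lemma poleMult_eq_zero' {g : ℂ → ℂ} {z : ℂ} (hg : AnalyticAt ℂ g z) :
    poleMult g z = 0 := by
  rw [poleMult, meroOrdAt_of_analytic' hg, hg.meromorphicOrderAt_eq]
  rcases eq_or_ne (analyticOrderAt g z) ⊤ with h | h
  · rw [h]
    rfl
  · obtain ⟨n, hn⟩ := WithTop.ne_top_iff_exists.mp h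
    rw [← hn]
    change (-((n:ℤ))).toNat = 0
    simp

lemma analyticAt_expexp (z : ℂ) : AnalyticAt ℂ (fun w => Complex.exp (Complex.exp w)) z :=
  analyticAt_cexp.cexp

lemma hasDerivAt_expexp (z : ℂ) :
    HasDerivAt (fun w => Complex.exp (Complex.exp w))
      (Complex.exp (Complex.exp z) * Complex.exp z) z :=
  (Complex.hasDerivAt_exp (Complex.exp z)).comp z (Complex.hasDerivAt_exp z)

lemma exp_log_two : Complex.exp ((Real.log 2 : ℝ) : ℂ) = 2 := by
  rw [← Complex.ofReal_exp, Real.exp_log (by norm_num : (0:ℝ) < 2)]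
  norm_num

lemma expexp_square (z : ℂ) :
    Complex.exp (Complex.exp (z + (Real.log 2 : ℂ))) = Complex.exp (Complex.exp z) ^ 2 := by
  rw [Complex.exp_add, exp_log_two, mul_two, Complex.exp_add, sq]

lemma zeroMult_expexp_one {z : ℂ} (hz : Complex.exp (Complex.exp z) = 1) :
    zeroMult (fun w => Complex.exp (Complex.exp w) - 1) z = 1 := by
  have hg : AnalyticAt ℂ (fun w => Complex.exp (Complex.exp w) - 1) z :=
    (analyticAt_expexp z).sub analyticAt_const
  refine zeroMult_eq_one' hg (by simp [hz]) ?_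
  have h := (hasDerivAt_expexp z).sub_const 1
  rw [h.deriv]
  exact mul_ne_zero (Complex.exp_ne_zero _) (Complex.exp_ne_zero _)

end Aux

/-- For `f(z) = exp(exp z)` and `c = log 2`: `f(z+c) = f(z)²` for all
`z`; `f` is entire and omits `0` (and `∞`); whenever `f(z₀) = 1` with multiplicity `k`
then `f(z₀+c) = 1` with multiplicity at least `k`; hence `0`, `1` and `∞` are three
exceptional paired values of `f` with separation `log 2`, yet `f` is not periodic with
period `log 2`, and `f` attains the value `1`. -/
theorem exp_exp_three_exceptional_paired_values :
    (∀ z : ℂ, Complex.exp (Complex.exp (z + (Real.log 2 : ℂ))) =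
      Complex.exp (Complex.exp z) ^ 2) ∧
    (∀ z : ℂ, AnalyticAt ℂ (fun w => Complex.exp (Complex.exp w)) z) ∧
    (∀ z : ℂ, Complex.exp (Complex.exp z) ≠ 0) ∧
    (∀ z : ℂ, Complex.exp (Complex.exp z) = 1 →
      zeroMult (fun w => Complex.exp (Complex.exp w) - 1) z ≤
        zeroMult (fun w => Complex.exp (Complex.exp w) - 1) (z + (Real.log 2 : ℂ))) ∧
    ExceptionalPaired (Real.log 2 : ℂ) (fun z => Complex.exp (Complex.exp z)) none ∧
    ExceptionalPaired (Real.log 2 : ℂ) (fun z => Complex.exp (Complex.exp z)) (some 0) ∧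
    ExceptionalPaired (Real.log 2 : ℂ) (fun z => Complex.exp (Complex.exp z)) (some 1) ∧
    ¬ MeroPeriodic (Real.log 2 : ℂ) (fun z => Complex.exp (Complex.exp z)) ∧
    (∃ z : ℂ, Complex.exp (Complex.exp z) = 1) := by

  have c2 : Complex.exp ((Real.log 2 : ℝ) : ℂ) = 2 := exp_log_two
  have fne : ∀ z : ℂ, Complex.exp (Complex.exp z) ≠ 0 := fun z => Complex.exp_ne_zero _
  have hsq := expexp_square
  refine ⟨hsq, analyticAt_expexp, fne, ?_, ?_, ?_, ?_, ?_, ?_⟩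
  · intro z hz
    have h2 : Complex.exp (Complex.exp (z + (Real.log 2 : ℂ))) = 1 := by
      rw [hsq z, hz, one_pow]
    rw [zeroMult_expexp_one hz, zeroMult_expexp_one h2]
  · -- none
    have : {z : ℂ | 1 ≤ valMult (fun z => Complex.exp (Complex.exp z)) none z ∧
        valMult (fun z => Complex.exp (Complex.exp z)) none (z + (Real.log 2 : ℂ)) <
          valMult (fun z => Complex.exp (Complex.exp z)) none z} = ∅ := by
      ext z
      simp only [Set.mem_setOf_eq, Set.mem_empty_iff_false, iff_false, not_and]
      intro h
      rw [valMult, poleMult_eq_zero' (analyticAt_expexp z)] at h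
      omega
    rw [ExceptionalPaired, this]
    exact Set.finite_empty
  · -- some 0
    have : {z : ℂ | 1 ≤ valMult (fun z => Complex.exp (Complex.exp z)) (some 0) z ∧
        valMult (fun z => Complex.exp (Complex.exp z)) (some 0) (z + (Real.log 2 : ℂ)) <
          valMult (fun z => Complex.exp (Complex.exp z)) (some 0) z} = ∅ := by
      ext z
      simp only [Set.mem_setOf_eq, Set.mem_empty_iff_false, iff_false, not_and]
      intro h
      have hg : AnalyticAt ℂ (fun w => Complex.exp (Complex.exp w) - 0) z :=
        (analyticAt_expexp z).sub analyticAt_const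
      rw [valMult, zeroMult_eq_zero' hg (by simp [fne z])] at h
      omega
    rw [ExceptionalPaired, this]
    exact Set.finite_empty
  · -- some 1
    have : {z : ℂ | 1 ≤ valMult (fun z => Complex.exp (Complex.exp z)) (some 1) z ∧
        valMult (fun z => Complex.exp (Complex.exp z)) (some 1) (z + (Real.log 2 : ℂ)) <
          valMult (fun z => Complex.exp (Complex.exp z)) (some 1) z} = ∅ := by
      ext z
      simp only [Set.mem_setOf_eq, Set.mem_empty_iff_false, iff_false, not_and]
      intro h
      by_cases hz : Complex.exp (Complex.exp z) = 1
      · have h2 : Complex.exp (Complex.exp (z + (Real.log 2 : ℂ))) = 1 := by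
          rw [hsq z, hz, one_pow]
        rw [valMult, valMult, zeroMult_expexp_one hz, zeroMult_expexp_one h2]
        omega
      · have hg : AnalyticAt ℂ (fun w => Complex.exp (Complex.exp w) - 1) z :=
          (analyticAt_expexp z).sub analyticAt_const
        rw [valMult, zeroMult_eq_zero' hg (sub_ne_zero.mpr hz)] at h
        omega
    rw [ExceptionalPaired, this]
    exact Set.finite_empty
  · -- not periodic
    intro hc
    have hsub : Set.range (Complex.ofReal) ⊆
        {z : ℂ | Complex.exp (Complex.exp (z + (Real.log 2 : ℂ))) ≠
          Complex.exp (Complex.exp z)} := by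
      rintro _ ⟨x, rfl⟩
      simp only [Set.mem_setOf_eq, hsq]
      intro heq
      have hm : Complex.exp (Complex.exp (x:ℂ)) * Complex.exp (Complex.exp (x:ℂ)) =
          1 * Complex.exp (Complex.exp (x:ℂ)) := by
        rw [one_mul, ← sq]
        exact heq
      have h1 : Complex.exp (Complex.exp (x:ℂ)) = 1 := mul_right_cancel₀ (fne (x:ℂ)) hm
      rw [← Complex.ofReal_exp, ← Complex.ofReal_exp] at h1
      have : Real.exp (Real.exp x) = 1 := by exact_mod_cast h1
      have hgt : 1 < Real.exp (Real.exp x) := by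
        rw [show (1:ℝ) = Real.exp 0 from (Real.exp_zero).symm]
        exact Real.exp_lt_exp.mpr (Real.exp_pos x)
      linarith
    have hcr : (Set.range (Complex.ofReal)).Countable := hc.mono hsub
    have := hcr.preimage Complex.ofReal_injective
    rw [Set.preimage_range] at this
    exact Cardinal.not_countable_real this
  · refine ⟨Complex.log (2 * Real.pi * Complex.I), ?_⟩
    have hne : (2 * (Real.pi : ℂ) * Complex.I) ≠ 0 :=
      mul_ne_zero (mul_ne_zero two_ne_zero
        (Complex.ofReal_ne_zero.mpr Real.pi_ne_zero)) Complex.I_ne_zero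
    rw [Complex.exp_log hne, Complex.exp_two_pi_mul_I]
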